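/- If a Büchi automaton M (over alphabet {0,1}) contains no loop, in its transition graph, that is labelled entirely by 0s and no loop labelled entirely by 1s, then every string α accepted by M can be written as α = w₁w₂w₃⋯ where each finite block wᵢ has length at most |S| (the number of states of M) and each wᵢ contains both the letter 0 and the letter 1. -/

import Mathlib

/-- A Büchi automaton over the alphabet `{0,1}` with state type `Q`. -/
structure Buchi (Q : Type*) where
  init : Q
  delta : Q → Fin 2 → Q → Prop
  accept : Set Q

/-- `r` is a run of `M` on the string `α`. -/
def IsRun {Q : Type*} (M : Buchi Q) (α : ℕ → Fin 2) (r : ℕ → Q) : Prop :=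
  r 0 = M.init ∧ ∀ i, M.delta (r i) (α i) (r (i + 1))

/-- `M` accepts `α`: some run of `M` on `α` visits an accepting state infinitely often. -/
def Accepts {Q : Type*} (M : Buchi Q) (α : ℕ → Fin 2) : Prop :=
  ∃ r : ℕ → Q, IsRun M α r ∧ ∃ q ∈ M.accept, ∀ N : ℕ, ∃ i, N ≤ i ∧ r i = q

/-- `M` has a loop in its transition graph all of whose labels are `c`. -/
def HasLoop {Q : Type*} (M : Buchi Q) (c : Fin 2) : Prop :=
  ∃ (l : ℕ) (p : ℕ → Q), 1 ≤ l ∧ p 0 = p l ∧ ∀ i < l, M.delta (p i) c (p (i + 1))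

/-!
Fix a run `r` of `M` on `α`. Among the `|S| + 1` states `r n, …, r (n + |S|)` two coincide, so the
stretch of the run between them is a loop labelled by `α n ⋯ α (n + |S| - 1)`. As there is no
monochromatic loop, every window of `|S|` consecutive letters contains both letters, and the blocks
`[i |S|, (i + 1) |S|)` do the job.
-/

section

variable {Q : Type*}

theorem HasLoop.of_map_eq {M : Buchi Q} {c : Fin 2} {p : ℕ → Q} {a b : ℕ} (hab : a < b)
    (hp : p a = p b) (hstep : ∀ i, a ≤ i → i < b → M.delta (p i) c (p (i + 1))) :
    HasLoop M c :=
  ⟨b - a, fun i => p (a + i), by omega, by simpa [Nat.add_sub_cancel' hab.le] using hp,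
    fun i hi => by simpa [Nat.add_assoc] using hstep (a + i) (by omega) (by omega)⟩

theorem exists_lt_map_eq_of_window [Fintype Q] (p : ℕ → Q) (n : ℕ) :
    ∃ a b, n ≤ a ∧ a < b ∧ b ≤ n + Fintype.card Q ∧ p a = p b := by
  classical
  obtain ⟨x, hx, y, hy, hxy, hpxy⟩ :=
    Finset.exists_ne_map_eq_of_card_lt_of_maps_to (t := Finset.univ)
      (s := Finset.Icc n (n + Fintype.card Q)) (f := p)
      (by simp only [Finset.card_univ, Nat.card_Icc]; omega)
      (fun _ _ => Finset.mem_coe.2 (Finset.mem_univ _))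
  rw [Finset.mem_Icc] at hx hy
  rcases hxy.lt_or_gt with hlt | hlt
  · exact ⟨x, y, hx.1, hlt, hy.2, hpxy⟩
  · exact ⟨y, x, hy.1, hlt, hx.2, hpxy.symm⟩

theorem IsRun.exists_ne_of_not_hasLoop [Fintype Q] {M : Buchi Q} {α : ℕ → Fin 2} {r : ℕ → Q}
    (hr : IsRun M α r) {c : Fin 2} (hc : ¬ HasLoop M c) (n : ℕ) :
    ∃ j, n ≤ j ∧ j < n + Fintype.card Q ∧ α j ≠ c := by
  by_contra! hconst
  obtain ⟨a, b, hna, hab, hbn, hrab⟩ := exists_lt_map_eq_of_window r n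
  exact hc <| HasLoop.of_map_eq hab hrab fun i hai hib =>
    hconst i (by omega) (by omega) ▸ hr.2 i

theorem exists_blocks_of_forall_window {α : ℕ → Fin 2} {N : ℕ} (hN : 0 < N)
    (hwindow : ∀ n (c : Fin 2), ∃ j, n ≤ j ∧ j < n + N ∧ α j = c) :
    ∃ k : ℕ → ℕ, k 0 = 0 ∧ StrictMono k ∧ (∀ i, k (i + 1) - k i ≤ N) ∧
      ∀ i, (∃ j, k i ≤ j ∧ j < k (i + 1) ∧ α j = 0) ∧
           (∃ j, k i ≤ j ∧ j < k (i + 1) ∧ α j = 1) := by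
  refine ⟨fun i => i * N, zero_mul N, strictMono_mul_right_of_pos hN, fun i => ?_,
    fun i => ⟨?_, ?_⟩⟩
  · simp [add_mul]
  all_goals simpa [add_mul] using hwindow (i * N) _

end

theorem no_monochromatic_loops_blocks {Q : Type*} [Fintype Q] (M : Buchi Q)
    (α : ℕ → Fin 2) (h0 : ¬ HasLoop M 0) (h1 : ¬ HasLoop M 1) (hacc : Accepts M α) :
    ∃ k : ℕ → ℕ, k 0 = 0 ∧ StrictMono k ∧ (∀ i, k (i + 1) - k i ≤ Fintype.card Q) ∧
      ∀ i, (∃ j, k i ≤ j ∧ j < k (i + 1) ∧ α j = 0) ∧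
           (∃ j, k i ≤ j ∧ j < k (i + 1) ∧ α j = 1) := by
  obtain ⟨r, hr, -⟩ := hacc
  have : Nonempty Q := ⟨M.init⟩
  refine exists_blocks_of_forall_window Fintype.card_pos fun n c => ?_
  match c with
  | 0 =>
    obtain ⟨j, hnj, hjn, hj⟩ := hr.exists_ne_of_not_hasLoop h1 n
    exact ⟨j, hnj, hjn, by omega⟩
  | 1 =>
    obtain ⟨j, hnj, hjn, hj⟩ := hr.exists_ne_of_not_hasLoop h0 n
    exact ⟨j, hnj, hjn, by omega⟩
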